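/- arXiv:1402.2714 — 3 statements merged into one kernel-verified Lean document; each statement's English description precedes it below -/
import Mathlib

section
/- The map sending x to the upper triangular matrix [[e^{u/2},1],[0,e^{-u/2}]] and y to the lower triangular matrix [[e^{u/2},0],[-d,e^{-u/2}]], where d = cosh(u) - 3/2 ± (1/2)√((2cosh u + 1)(2cosh u - 3)), defines a representation of the figure-eight knot group ⟨x,y | x y⁻¹ x⁻¹ y x = y x y⁻¹ x⁻¹ y⟩ into SL(2,ℂ); that is, the assigned matrices satisfy X Y⁻¹ X⁻¹ Y X = Y X Y⁻¹ X⁻¹ Y. -/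
/-!
Put `e = exp (u/2)` and `f = exp (-u/2)`, so that `e f = 1`. Both generators then have determinant
one, so their inverses are their adjugates, and multiplying out shows that the two sides of the
relation agree on the diagonal while their off-diagonal entries differ by `p` and `d p` (modulo
`e f = 1`), where `p = d² + (3 - e² - f²)(d + 1)` is the Riley polynomial of the figure-eight knot.
With `c = cosh u = (e² + f²)/2` one has `4 p = (2d - 2c + 3)² - (2c + 1)(2c - 3)`, which vanishes
for the given `d`.
-/

open Complex Matrix

namespace FigureEight

variable {R : Type*} [CommRing R]

theorem inv_fin_two_of_det_eq_one {a b c d : R} (h : a * d - b * c = 1) :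
    !![a, b; c, d]⁻¹ = !![d, -b; -c, a] := by
  rw [Matrix.inv_def, det_fin_two_of, h, Ring.inverse_one, one_smul, adjugate_fin_two_of]

def rileyPoly (e f d : R) : R := d ^ 2 + (3 - e ^ 2 - f ^ 2) * (d + 1)

theorem relator_eq_iff {e f d : R} (hef : e * f = 1) :
    !![e, 1; 0, f] * !![e, 0; -d, f]⁻¹ * !![e, 1; 0, f]⁻¹ * !![e, 0; -d, f] * !![e, 1; 0, f] =
      !![e, 0; -d, f] * !![e, 1; 0, f] * !![e, 0; -d, f]⁻¹ * !![e, 1; 0, f]⁻¹ * !![e, 0; -d, f] ↔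
      rileyPoly e f d = 0 := by
  rw [inv_fin_two_of_det_eq_one (by rw [hef, zero_mul, sub_zero]),
    inv_fin_two_of_det_eq_one (by rw [hef, mul_zero, sub_zero])]
  simp only [mul_fin_two, EmbeddingLike.apply_eq_iff_eq, vecCons_inj, and_true, rileyPoly]
  constructor
  · rintro ⟨⟨-, h01⟩, -⟩
    linear_combination h01 - (3 * d + 3 * e * f + 3 - e ^ 2 - f ^ 2) * hef
  · intro hp
    refine ⟨⟨by ring, ?_⟩, ?_, by ring⟩
    · linear_combination hp + (3 * d + 3 * e * f + 3 - e ^ 2 - f ^ 2) * hef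
    · linear_combination d * hp + d * (3 * d + 3 * e * f + 3 - e ^ 2 - f ^ 2) * hef

theorem rileyPoly_eq_zero {K : Type*} [Field K] (h2 : (2 : K) ≠ 0) {e f c s d : K}
    (hc : e ^ 2 + f ^ 2 = 2 * c) (hs : s ^ 2 = (2 * c + 1) * (2 * c - 3))
    (hd : d = c - 3 / 2 + s / 2) : rileyPoly e f d = 0 := by
  have h2d : 2 * d = 2 * c - 3 + s := by rw [hd]; field_simp
  have h4 : (2 : K) ^ 2 * rileyPoly e f d = 0 := by
    rw [rileyPoly, sub_sub, hc]
    linear_combination (2 * d + s + 3 - 2 * c) * h2d + hs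
  simpa [h2] using h4

end FigureEight

theorem exp_half_mul_exp_neg_half (u : ℂ) : exp (u / 2) * exp (-u / 2) = 1 := by
  rw [← exp_add, neg_div, add_neg_cancel, exp_zero]

theorem exp_half_sq_add_exp_neg_half_sq (u : ℂ) :
    exp (u / 2) ^ 2 + exp (-u / 2) ^ 2 = 2 * cosh u := by
  rw [← exp_nat_mul, ← exp_nat_mul, cosh]
  ring_nf

/-- The assignment x ↦ X, y ↦ Y satisfies the figure-eight knot group relation
`x y⁻¹ x⁻¹ y x = y x y⁻¹ x⁻¹ y`, hence defines a representation of
⟨x,y | x y⁻¹ x⁻¹ y x = y x y⁻¹ x⁻¹ y⟩ into SL(2,ℂ). Here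
`s` is a fixed complex square root of `(2cosh u + 1)(2cosh u - 3)` and
`d = cosh u - 3/2 + s/2` (either choice of square root gives either sign `±`). -/
theorem figure_eight_representation (u s : ℂ)
    (hs : s ^ 2 = (2 * Complex.cosh u + 1) * (2 * Complex.cosh u - 3))
    (d : ℂ) (hd : d = Complex.cosh u - 3 / 2 + s / 2)
    (X Y : Matrix (Fin 2) (Fin 2) ℂ)
    (hX : X = !![Complex.exp (u / 2), 1; 0, Complex.exp (-u / 2)])
    (hY : Y = !![Complex.exp (u / 2), 0; -d, Complex.exp (-u / 2)]) :
    X * Y⁻¹ * X⁻¹ * Y * X = Y * X * Y⁻¹ * X⁻¹ * Y := by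
  subst hX hY
  rw [FigureEight.relator_eq_iff (exp_half_mul_exp_neg_half u)]
  exact FigureEight.rileyPoly_eq_zero two_ne_zero (exp_half_sq_add_exp_neg_half_sq u) hs hd
end

section
/- In the group with presentation ⟨x,y,p,q | (xy)^a x = y(xy)^a, x λ_C = λ_C x, λ_C x^b p = q x^b λ_C, x = pq⟩ where λ_C = y(xy)^{2a}x^{-4a-1}, the relation x λ_C = λ_C x is a consequence of the relation (xy)^a x = y(xy)^a; that is, in ⟨x,y | (xy)^a x = y(xy)^a⟩ one has x λ_C x⁻¹ λ_C⁻¹ = 1. -/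
/-! With `z = x y` the relation reads `z ^ a * x = y * z ^ a`, i.e. `x z^a x = z^(a+1)`.
Hence `z^(2a+1) = z^a (x z^a x) = (x z^a x) z^a`, and both bracketings show that `x` commutes
with `z^(2a+1) = x (y z^(2a))`, so with `y z^(2a)`, and so with `λ_C = y z^(2a) x^(-4a-1)`. -/

theorem Commute.of_mul_pow_mul_eq_pow_succ {G : Type*} [Group G] {x z : G} {a : ℕ}
    (h : x * z ^ a * x = z ^ (a + 1)) : Commute x (z ^ (2 * a + 1)) := by
  have left : z ^ (2 * a + 1) = z ^ a * (x * z ^ a * x) := by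
    rw [h, ← pow_add]; ring_nf
  have right : z ^ (2 * a + 1) = x * z ^ a * x * z ^ a := by
    rw [h, ← pow_add]; ring_nf
  calc x * z ^ (2 * a + 1) = x * z ^ a * x * z ^ a * x := by rw [left]; group
    _ = z ^ (2 * a + 1) * x := by rw [← right]

theorem mul_mul_pow_mul_eq_pow_succ {G : Type*} [Group G] {x y : G} {a : ℕ}
    (h : (x * y) ^ a * x = y * (x * y) ^ a) : x * (x * y) ^ a * x = (x * y) ^ (a + 1) := by
  rw [mul_assoc, h, ← mul_assoc, ← pow_succ']

theorem Commute.mul_pow_two_mul {G : Type*} [Group G] {x y : G} {a : ℕ}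
    (h : (x * y) ^ a * x = y * (x * y) ^ a) : Commute x (y * (x * y) ^ (2 * a)) := by
  have hxz := Commute.of_mul_pow_mul_eq_pow_succ (mul_mul_pow_mul_eq_pow_succ h)
  have hy : y * (x * y) ^ (2 * a) = x⁻¹ * (x * y) ^ (2 * a + 1) := by
    rw [pow_succ', mul_assoc, inv_mul_cancel_left]
  rw [hy]
  exact (Commute.refl x).inv_right.mul_right hxz

theorem longitude_commutes_with_meridian_general (a : ℕ)
    {G : Type*} [Group G] (x y : G)
    (h : (x * y) ^ a * x = y * (x * y) ^ a) :
    x * (y * (x * y) ^ (2 * a) * (x ^ (4 * a + 1))⁻¹) =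
      (y * (x * y) ^ (2 * a) * (x ^ (4 * a + 1))⁻¹) * x :=
  (Commute.mul_pow_two_mul h).mul_right (Commute.self_pow x _).inv_right

/-- In ⟨x,y | (xy)^a x = y (xy)^a⟩, the element x commutes with
λ_C = y (xy)^{2a} x^{-4a-1}; that is, x λ_C x⁻¹ λ_C⁻¹ = 1.
(Stated for an arbitrary group with elements satisfying the relation,
which is equivalent to the statement in the presented group.) -/
theorem longitude_commutes_with_meridian (a : ℕ) (ha : 0 < a)
    {G : Type*} [Group G] (x y : G)
    (h : (x * y) ^ a * x = y * (x * y) ^ a) :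
    x * (y * (x * y) ^ (2 * a) * (x ^ (4 * a + 1))⁻¹) =
      (y * (x * y) ^ (2 * a) * (x ^ (4 * a + 1))⁻¹) * x :=
  longitude_commutes_with_meridian_general a x y h
end

section
/- Let α ∈ ℂ* and p ∈ ℂ, and let C_θ = {t e^{iθ} : t ∈ ℝ} with Re(α e^{2iθ}) > 0. Then √(α/π) ∫_{C_θ} exp(-αx² + px) dx = exp(p²/(4α)), for an appropriate branch of the square root. -/
open Complex MeasureTheory

/-! Parametrising `C_θ` by `t ↦ t e^{iθ}` turns the contour integral into a Gaussian integral over `ℝ`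
with coefficient `α e^{2iθ}`, whose real part is positive, so Mathlib's `integral_cexp_quadratic`
applies. The branch is `s = (e^{iθ} √(π / (α e^{2iθ})))⁻¹`, with `√` the principal branch. -/

theorem integral_cexp_quadratic_line {α w : ℂ} (hre : 0 < (α * w ^ 2).re) (p : ℂ) :
    ∫ t : ℝ, cexp (-α * ((t : ℂ) * w) ^ 2 + p * ((t : ℂ) * w)) * w =
      w * ((Real.pi : ℂ) / (α * w ^ 2)) ^ (1 / 2 : ℂ) * cexp (p ^ 2 / (4 * α)) := by
  have hαw : α * w ^ 2 ≠ 0 := fun h => by simp [h] at hre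
  have hα : α ≠ 0 := left_ne_zero_of_mul hαw
  have hw : w ≠ 0 := by rintro rfl; simp at hαw
  have hexpand : ∀ t : ℝ, -α * ((t : ℂ) * w) ^ 2 + p * ((t : ℂ) * w) =
      -(α * w ^ 2) * (t : ℂ) ^ 2 + (p * w) * t + 0 := fun t => by ring
  have hexponent : (0 : ℂ) - (p * w) ^ 2 / (4 * -(α * w ^ 2)) = p ^ 2 / (4 * α) := by
    field_simp
    ring
  have hneg : (-(α * w ^ 2)).re < 0 := by simpa using hre
  rw [integral_mul_const]
  simp_rw [hexpand]
  rw [integral_cexp_quadratic hneg, neg_neg, hexponent]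
  ring

theorem cpow_one_half_sq (x : ℂ) : (x ^ (1 / 2 : ℂ)) ^ 2 = x := by
  rw [show (1 / 2 : ℂ) = ((2 : ℕ) : ℂ)⁻¹ by norm_num, cpow_nat_inv_pow _ two_ne_zero]

theorem gaussian_integral_line_general (α p : ℂ) (θ : ℝ)
    (hre : 0 < (α * Complex.exp (2 * θ * Complex.I)).re) :
    ∃ s : ℂ, s ^ 2 = α / (Real.pi : ℂ) ∧
      s * ∫ t : ℝ,
          Complex.exp (-α * ((t : ℂ) * Complex.exp (θ * Complex.I)) ^ 2 +
              p * ((t : ℂ) * Complex.exp (θ * Complex.I))) *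
            Complex.exp (θ * Complex.I) =
        Complex.exp (p ^ 2 / (4 * α)) := by
  set w := cexp (θ * I)
  have hw2 : w ^ 2 = cexp (2 * θ * I) := by rw [← Complex.exp_nat_mul]; ring_nf
  rw [← hw2] at hre
  have hβ : α * w ^ 2 ≠ 0 := fun h => by simp [h] at hre
  have hw : w ≠ 0 := Complex.exp_ne_zero _
  have hπ : (Real.pi : ℂ) ≠ 0 := ofReal_ne_zero.mpr Real.pi_ne_zero
  set r := ((Real.pi : ℂ) / (α * w ^ 2)) ^ (1 / 2 : ℂ)
  have hr2 : r ^ 2 = Real.pi / (α * w ^ 2) := cpow_one_half_sq _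
  have hr : r ≠ 0 := fun h => div_ne_zero hπ hβ (by rw [← hr2, h]; ring)
  refine ⟨(w * r)⁻¹, ?_, ?_⟩
  · rw [inv_pow, mul_pow, hr2]
    field_simp
  · rw [integral_cexp_quadratic_line hre, ← mul_assoc, inv_mul_cancel₀ (mul_ne_zero hw hr), one_mul]

/-- Gaussian integral along the line C_θ = {t e^{iθ} : t ∈ ℝ}: for α ∈ ℂ* with
Re(α e^{2iθ}) > 0 and p ∈ ℂ, √(α/π) ∫_{C_θ} exp(-αx² + px) dx = exp(p²/(4α))
for the appropriate branch of the square root. -/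
theorem gaussian_integral_line (α p : ℂ) (hα : α ≠ 0) (θ : ℝ)
    (hre : 0 < (α * Complex.exp (2 * θ * Complex.I)).re) :
    ∃ s : ℂ, s ^ 2 = α / (Real.pi : ℂ) ∧
      s * ∫ t : ℝ,
          Complex.exp (-α * ((t : ℂ) * Complex.exp (θ * Complex.I)) ^ 2 +
              p * ((t : ℂ) * Complex.exp (θ * Complex.I))) *
            Complex.exp (θ * Complex.I) =
        Complex.exp (p ^ 2 / (4 * α)) :=
  gaussian_integral_line_general α p θ hre
end
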